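/- arXiv:1311.3955 — 3 statements merged into one kernel-verified Lean document; each statement's English description precedes it below -/
import Mathlib

section
/- If a semigroup S has rational word problem, then every finitely generated subsemigroup of S also has rational word problem. -/
/-! Choose finitely many generators `B` of `T` and, for each, a word over the generators `A` of
`S` representing it. This gives a non-erasing substitution `φ : B* → A*` with
`ι(T, B) = (φ × φ)⁻¹ ι(S, A)`, so it suffices that rational relations are closed under inverse
images of non-erasing substitutions. Given an automaton for a rational relation `R`, an
automaton for its preimage reads a letter `b` on a tape only when that tape's buffer is empty,
loading `φ b` into it, and feeds buffered letters to the automaton for `R` by ε-moves. The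
buffers only ever hold suffixes of the finitely many words `φ b`, so finitely many states are
reachable. -/

/-- The monoid homomorphism `(A ⊕ A)* → A* × A*` sending `inl a ↦ (a, ε)` and
`inr a ↦ (ε, a)`, used to define rational (asynchronous two-tape) relations. -/
def twoTapeHom (A : Type) : FreeMonoid (A ⊕ A) →* FreeMonoid A × FreeMonoid A :=
  FreeMonoid.lift (Sum.elim (fun a => (FreeMonoid.of a, 1)) (fun a => (1, FreeMonoid.of a)))

/-- A relation `R ⊆ A* × A*` is rational if it is the image of a regular language
over the alphabet `A ⊕ A` under `twoTapeHom`; equivalently, it is recognised by a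
two-tape asynchronous finite automaton. -/
def IsRationalRel {A : Type} (R : Set (FreeMonoid A × FreeMonoid A)) : Prop :=
  ∃ L : Language (A ⊕ A), L.IsRegular ∧
    twoTapeHom A '' {w : FreeMonoid (A ⊕ A) | w.toList ∈ L} = R

/-- The canonical embedding of the free semigroup `A⁺` into the free monoid `A*`. -/
def freeSemigroupToWord {A : Type} : FreeSemigroup A →ₙ* FreeMonoid A :=
  FreeSemigroup.lift FreeMonoid.of

/-- The two-tape word problem `ι(S,A)` of a semigroup `S` with respect to a
(generating) map `f : A → S`: all pairs of nonempty words over `A` whose images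
in `S` coincide, viewed as a relation on words in `A*`. -/
def wordProblem {A S : Type} [Semigroup S] (f : A → S) :
    Set (FreeMonoid A × FreeMonoid A) :=
  {p | ∃ w₁ w₂ : FreeSemigroup A,
        FreeSemigroup.lift f w₁ = FreeSemigroup.lift f w₂ ∧
        p = (freeSemigroupToWord w₁, freeSemigroupToWord w₂)}

/-- A semigroup has rational word problem if it is generated by some finite set `A`
(i.e. there is `f : A → S` with the induced homomorphism `A⁺ → S` surjective) for
which the two-tape word problem is a rational relation. -/
def HasRationalWordProblem (S : Type) [Semigroup S] : Prop :=
  ∃ (A : Type) (_ : Fintype A) (f : A → S),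
    Function.Surjective ⇑(FreeSemigroup.lift f) ∧ IsRationalRel (wordProblem f)

namespace εNFA

variable {α : Type*} {σ : Type*}

def restrict (M : εNFA α σ) (P : Set σ) : εNFA α P where
  step s a := Subtype.val ⁻¹' M.step s a
  start := Subtype.val ⁻¹' M.start
  accept := Subtype.val ⁻¹' M.accept

variable {M : εNFA α σ} {P : Set σ} {x : List (Option α)}

theorem IsPath.of_restrict {s t : P} (h : (M.restrict P).IsPath s t x) : M.IsPath s t x := by
  induction h with
  | nil => exact .nil _
  | cons t s u a x hstep _ ih => exact .cons _ _ _ _ _ hstep ih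

theorem IsPath.restrict (hP : ∀ s ∈ P, ∀ a, M.step s a ⊆ P) {s t : σ} (h : M.IsPath s t x)
    (hs : s ∈ P) : ∃ ht : t ∈ P, (M.restrict P).IsPath ⟨s, hs⟩ ⟨t, ht⟩ x := by
  induction h with
  | nil => exact ⟨hs, .nil _⟩
  | cons t s u a x hstep _ ih =>
    obtain ⟨hu, h⟩ := ih (hP s hs a hstep)
    exact ⟨hu, .cons _ _ _ _ _ hstep h⟩

theorem accepts_restrict (hstart : M.start ⊆ P) (hP : ∀ s ∈ P, ∀ a, M.step s a ⊆ P) :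
    (M.restrict P).accepts = M.accepts := by
  ext x
  simp only [mem_accepts_iff_exists_path]
  constructor
  · rintro ⟨s, t, x', hs, ht, hx', h⟩
    exact ⟨s, t, x', hs, ht, hx', h.of_restrict⟩
  · rintro ⟨s, t, x', hs, ht, hx', h⟩
    obtain ⟨htP, h⟩ := h.restrict hP (hstart hs)
    exact ⟨⟨s, hstart hs⟩, ⟨t, htP⟩, x', hs, ht, hx', h⟩

theorem isRegular_accepts_of_finite (hP : P.Finite) (hstart : M.start ⊆ P)
    (hstep : ∀ s ∈ P, ∀ a, M.step s a ⊆ P) : M.accepts.IsRegular := by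
  have := hP.fintype
  rw [← accepts_restrict hstart hstep, ← toNFA_correct, ← NFA.toDFA_correct]
  exact Language.isRegular_iff.mpr ⟨_, inferInstance, _, rfl⟩

end εNFA

section RationalRelations

variable {A B Q : Type}

def leftTape (w : List (A ⊕ A)) : List A := w.filterMap Sum.getLeft?

def rightTape (w : List (A ⊕ A)) : List A := w.filterMap Sum.getRight?

@[simp] theorem leftTape_nil : leftTape ([] : List (A ⊕ A)) = [] := rfl
@[simp] theorem rightTape_nil : rightTape ([] : List (A ⊕ A)) = [] := rfl
@[simp] theorem leftTape_cons_inl (a : A) (w : List (A ⊕ A)) :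
    leftTape (.inl a :: w) = a :: leftTape w := rfl
@[simp] theorem leftTape_cons_inr (a : A) (w : List (A ⊕ A)) :
    leftTape (.inr a :: w) = leftTape w := rfl
@[simp] theorem rightTape_cons_inl (a : A) (w : List (A ⊕ A)) :
    rightTape (.inl a :: w) = rightTape w := rfl
@[simp] theorem rightTape_cons_inr (a : A) (w : List (A ⊕ A)) :
    rightTape (.inr a :: w) = a :: rightTape w := rfl

theorem twoTapeHom_ofList (w : List (A ⊕ A)) :
    twoTapeHom A (FreeMonoid.ofList w) =
      (FreeMonoid.ofList (leftTape w), FreeMonoid.ofList (rightTape w)) := by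
  induction w with
  | nil => rfl
  | cons c w ih =>
    rw [FreeMonoid.ofList_cons, map_mul, ih]
    cases c <;> simp [twoTapeHom, FreeMonoid.ofList_cons]

theorem mem_image_twoTapeHom {L : Language (A ⊕ A)} {p : FreeMonoid A × FreeMonoid A} :
    p ∈ twoTapeHom A '' {w | w.toList ∈ L} ↔
      ∃ w ∈ L, leftTape w = p.1.toList ∧ rightTape w = p.2.toList := by
  constructor
  · rintro ⟨w, hw, rfl⟩
    have h := twoTapeHom_ofList w.toList
    rw [FreeMonoid.ofList_toList] at h
    exact ⟨w.toList, hw, by simp [h]⟩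
  · rintro ⟨w, hw, hl, hr⟩
    refine ⟨FreeMonoid.ofList w, hw, ?_⟩
    rw [twoTapeHom_ofList, hl, hr]
    rfl

theorem FreeMonoid.toList_hom_apply (φ : FreeMonoid B →* FreeMonoid A)
    (m : FreeMonoid B) : (φ m).toList = m.toList.flatMap fun b => (φ (.of b)).toList := by
  induction m using FreeMonoid.inductionOn' with
  | one => simp
  | of_mul b m ih => simp [ih]

theorem eq_nil_of_flatMap_eq_nil {f : B → List A} (hf : ∀ b, f b ≠ []) {u : List B}
    (h : u.flatMap f = []) : u = [] :=
  List.eq_nil_iff_forall_not_mem.mpr fun b hb => hf b (List.flatMap_eq_nil_iff.mp h b hb)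

def suffixesOfRange (f : B → List A) : Set (List A) := {x | x = [] ∨ ∃ b, x <:+ f b}

theorem suffixesOfRange_finite [Finite B] (f : B → List A) : (suffixesOfRange f).Finite := by
  refine ((Set.finite_iUnion fun b => List.finite_toSet (f b).tails).insert []).subset ?_
  rintro x (rfl | ⟨b, hb⟩)
  · exact Set.mem_insert _ _
  · exact Set.mem_insert_of_mem _ (Set.mem_iUnion.mpr ⟨b, (List.mem_tails _ _).mpr hb⟩)

theorem mem_suffixesOfRange_of_cons {f : B → List A} {a : A} {x : List A}
    (h : a :: x ∈ suffixesOfRange f) : x ∈ suffixesOfRange f := by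
  obtain ⟨b, hb⟩ := h.resolve_left (List.cons_ne_nil a x)
  exact .inr ⟨b, (List.suffix_cons a x).trans hb⟩

theorem mem_suffixesOfRange_self (f : B → List A) (b : B) : f b ∈ suffixesOfRange f :=
  .inr ⟨b, List.suffix_refl _⟩

section BufferAutomaton

variable (M : DFA (A ⊕ A) Q) (σ τ : B → List A)

inductive BufferStep : Q × List A × List A → Option (B ⊕ B) → Q × List A × List A → Prop
  | feedLeft (q : Q) (a : A) (x y : List A) :
      BufferStep (q, a :: x, y) none (M.step q (.inl a), x, y)
  | feedRight (q : Q) (a : A) (x y : List A) :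
      BufferStep (q, x, a :: y) none (M.step q (.inr a), x, y)
  | loadLeft (q : Q) (y : List A) (b : B) :
      BufferStep (q, [], y) (some (.inl b)) (q, σ b, y)
  | loadRight (q : Q) (x : List A) (b : B) :
      BufferStep (q, x, []) (some (.inr b)) (q, x, τ b)

def bufferεNFA : εNFA (B ⊕ B) (Q × List A × List A) where
  step c o := {c' | BufferStep M σ τ c o c'}
  start := {(M.start, [], [])}
  accept := {c | c.1 ∈ M.accept ∧ c.2 = ([], [])}

variable {M σ τ}

theorem exists_run_of_isPath_bufferεNFA {c c' : Q × List A × List A} {p : List (Option (B ⊕ B))}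
    (h : (bufferεNFA M σ τ).IsPath c c' p) (hc' : c'.2 = ([], [])) :
    ∃ w, M.evalFrom c.1 w = c'.1 ∧
      leftTape w = c.2.1 ++ (leftTape p.reduceOption).flatMap σ ∧
      rightTape w = c.2.2 ++ (rightTape p.reduceOption).flatMap τ := by
  induction h with
  | nil c => exact ⟨[], rfl, by simp [hc'], by simp [hc']⟩
  | cons t s u o p hstep _ ih =>
    obtain ⟨w, hw, hl, hr⟩ := ih hc'
    cases hstep with
    | feedLeft q a x y => exact ⟨.inl a :: w, hw, by simp [hl], by simp [hr]⟩
    | feedRight q a x y => exact ⟨.inr a :: w, hw, by simp [hl], by simp [hr]⟩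
    | loadLeft q y b => exact ⟨w, hw, by simp [hl], by simp [hr]⟩
    | loadRight q x b => exact ⟨w, hw, by simp [hl], by simp [hr]⟩


theorem exists_isPath_bufferεNFA (hσ : ∀ b, σ b ≠ []) (hτ : ∀ b, τ b ≠ [])
    (w : List (A ⊕ A)) (q : Q) (x y : List A) (u v : List B) (hl : leftTape w = x ++ u.flatMap σ)
    (hr : rightTape w = y ++ v.flatMap τ) :
    ∃ p : List (Option (B ⊕ B)), leftTape p.reduceOption = u ∧ rightTape p.reduceOption = v ∧
      (bufferεNFA M σ τ).IsPath (q, x, y) (M.evalFrom q w, [], []) p := by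
  induction w generalizing q x y u v with
  | nil =>
    obtain ⟨rfl, hu⟩ := List.append_eq_nil_iff.mp hl.symm
    obtain ⟨rfl, hv⟩ := List.append_eq_nil_iff.mp hr.symm
    obtain rfl := eq_nil_of_flatMap_eq_nil hσ hu
    obtain rfl := eq_nil_of_flatMap_eq_nil hτ hv
    exact ⟨[], rfl, rfl, .nil _⟩
  | cons c w ih =>
    cases c with
    | inl a =>
      simp only [leftTape_cons_inl, rightTape_cons_inl] at hl hr
      rcases x with _ | ⟨a', x⟩
      · obtain _ | ⟨b, u⟩ := u
        · simp at hl
        obtain ⟨a', t, hb⟩ := List.exists_cons_of_ne_nil (hσ b)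
        rw [List.flatMap_cons, hb, List.nil_append, List.cons_append] at hl
        obtain ⟨rfl, hl'⟩ := List.cons.inj hl
        obtain ⟨p, hpl, hpr, hp⟩ := ih (M.step q (.inl a)) t y u v hl' hr
        exact ⟨some (.inl b) :: none :: p, by simp [hpl], by simp [hpr],
          .cons _ _ _ _ _ (.loadLeft q y b) (hb ▸ .cons _ _ _ _ _ (.feedLeft q a t y) hp)⟩
      · obtain ⟨rfl, hl'⟩ := List.cons.inj hl
        obtain ⟨p, hpl, hpr, hp⟩ := ih (M.step q (.inl a)) x y u v hl' hr
        exact ⟨none :: p, by simp [hpl], by simp [hpr],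
          .cons _ _ _ _ _ (.feedLeft q a x y) hp⟩
    | inr a =>
      simp only [leftTape_cons_inr, rightTape_cons_inr] at hl hr
      rcases y with _ | ⟨a', y⟩
      · obtain _ | ⟨b, v⟩ := v
        · simp at hr
        obtain ⟨a', t, hb⟩ := List.exists_cons_of_ne_nil (hτ b)
        rw [List.flatMap_cons, hb, List.nil_append, List.cons_append] at hr
        obtain ⟨rfl, hr'⟩ := List.cons.inj hr
        obtain ⟨p, hpl, hpr, hp⟩ := ih (M.step q (.inr a)) x t u v hl hr'
        exact ⟨some (.inr b) :: none :: p, by simp [hpl], by simp [hpr],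
          .cons _ _ _ _ _ (.loadRight q x b) (hb ▸ .cons _ _ _ _ _ (.feedRight q a x t) hp)⟩
      · obtain ⟨rfl, hr'⟩ := List.cons.inj hr
        obtain ⟨p, hpl, hpr, hp⟩ := ih (M.step q (.inr a)) x y u v hl hr'
        exact ⟨none :: p, by simp [hpl], by simp [hpr],
          .cons _ _ _ _ _ (.feedRight q a x y) hp⟩

theorem exists_mem_accepts_bufferεNFA_iff (hσ : ∀ b, σ b ≠ []) (hτ : ∀ b, τ b ≠ [])
    (u v : List B) :
    (∃ z ∈ (bufferεNFA M σ τ).accepts, leftTape z = u ∧ rightTape z = v) ↔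
      ∃ w ∈ M.accepts, leftTape w = u.flatMap σ ∧ rightTape w = v.flatMap τ := by
  simp only [εNFA.mem_accepts_iff_exists_path]
  constructor
  · rintro ⟨_, ⟨_, c, p, rfl, ⟨hc, hc'⟩, rfl, hp⟩, rfl, rfl⟩
    obtain ⟨w, hw, hl, hr⟩ := exists_run_of_isPath_bufferεNFA hp hc'
    exact ⟨w, by rwa [DFA.mem_accepts, DFA.eval, hw], hl, hr⟩
  · rintro ⟨w, hw, hl, hr⟩
    obtain ⟨p, hpl, hpr, hp⟩ := exists_isPath_bufferεNFA hσ hτ w M.start [] [] u v hl hr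
    exact ⟨_, ⟨_, (M.eval w, [], []), p, rfl, ⟨hw, rfl⟩, rfl, hp⟩, hpl, hpr⟩

theorem isRegular_bufferεNFA_accepts [Finite B] [Finite Q] :
    (bufferεNFA M σ τ).accepts.IsRegular := by
  refine εNFA.isRegular_accepts_of_finite
    (P := Set.univ ×ˢ suffixesOfRange σ ×ˢ suffixesOfRange τ)
    (Set.finite_univ.prod ((suffixesOfRange_finite σ).prod (suffixesOfRange_finite τ)))
    (by simp [bufferεNFA, suffixesOfRange]) ?_
  rintro _ ⟨-, hx, hy⟩ _ _ hstep
  cases hstep with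
  | feedLeft => exact ⟨trivial, mem_suffixesOfRange_of_cons hx, hy⟩
  | feedRight => exact ⟨trivial, hx, mem_suffixesOfRange_of_cons hy⟩
  | loadLeft q y b => exact ⟨trivial, mem_suffixesOfRange_self σ b, hy⟩
  | loadRight q x b => exact ⟨trivial, hx, mem_suffixesOfRange_self τ b⟩

end BufferAutomaton

theorem IsRationalRel.preimage_prodMap [Finite B] {R : Set (FreeMonoid A × FreeMonoid A)}
    (hR : IsRationalRel R) (φ ψ : FreeMonoid B →* FreeMonoid A) (hφ : ∀ b, φ (.of b) ≠ 1)
    (hψ : ∀ b, ψ (.of b) ≠ 1) : IsRationalRel (Prod.map φ ψ ⁻¹' R) := by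
  obtain ⟨L, ⟨Q, _, M, rfl⟩, rfl⟩ := hR
  have toList_ne_nil {m : FreeMonoid A} (hm : m ≠ 1) : m.toList ≠ [] :=
    fun h => hm (FreeMonoid.toList.injective h)
  refine ⟨_, isRegular_bufferεNFA_accepts (M := M) (σ := fun b => (φ (.of b)).toList)
    (τ := fun b => (ψ (.of b)).toList), ?_⟩
  ext p
  rw [Set.mem_preimage, mem_image_twoTapeHom, mem_image_twoTapeHom,
    exists_mem_accepts_bufferεNFA_iff (fun b => toList_ne_nil (hφ b))
      (fun b => toList_ne_nil (hψ b)),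
    Prod.map_fst, Prod.map_snd, FreeMonoid.toList_hom_apply φ, FreeMonoid.toList_hom_apply ψ]

end RationalRelations

theorem Subsemigroup.lift_closure_surjective {M : Type*} [Semigroup M] (s : Set M) :
    Function.Surjective
      (FreeSemigroup.lift fun x : s => (⟨x, subset_closure x.2⟩ : closure s)) := by
  rintro ⟨y, hy⟩
  induction hy using closure_induction with
  | mem x hx => exact ⟨.of ⟨x, hx⟩, rfl⟩
  | mul x y _ _ ihx ihy =>
    obtain ⟨u, hu⟩ := ihx
    obtain ⟨v, hv⟩ := ihy
    exact ⟨u * v, by rw [map_mul, hu, hv]; rfl⟩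

section WordProblem

variable {A B S S' : Type} [Semigroup S] [Semigroup S']

theorem mem_wordProblem {f : A → S} {p : FreeMonoid A × FreeMonoid A} :
    p ∈ wordProblem f ↔ ∃ x₁ x₂, FreeSemigroup.lift f x₁ = FreeSemigroup.lift f x₂ ∧
      x₁.toFreeMonoid = p.1 ∧ x₂.toFreeMonoid = p.2 := by
  simp only [wordProblem, Set.mem_ofPred_eq, Prod.ext_iff, eq_comm]
  rfl

theorem wordProblem_eq_preimage (f : A → S) {h : S' →ₙ* S} (hh : Function.Injective h)
    (g : B → S') (w : B → FreeSemigroup A) (hw : ∀ b, FreeSemigroup.lift f (w b) = h (g b)) :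
    wordProblem g = Prod.map (FreeMonoid.lift fun b => (w b).toFreeMonoid)
      (FreeMonoid.lift fun b => (w b).toFreeMonoid) ⁻¹' wordProblem f := by
  set φ : FreeMonoid B →* FreeMonoid A := FreeMonoid.lift fun b => (w b).toFreeMonoid
  have hφ (x : FreeSemigroup B) : φ x.toFreeMonoid = (FreeSemigroup.lift w x).toFreeMonoid := by
    induction x using FreeSemigroup.recOnMul with
    | ih1 b => simp [φ]
    | ih2 x y hx hy => simp only [map_mul, hx, hy]
  have hf (x : FreeSemigroup B) : FreeSemigroup.lift f (FreeSemigroup.lift w x) =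
      h (FreeSemigroup.lift g x) := by
    induction x using FreeSemigroup.recOnMul with
    | ih1 b => simp [hw]
    | ih2 x y hx hy => simp only [map_mul, hx, hy]
  have lift_of_image {m : FreeMonoid B} {y : FreeSemigroup A} (hm : φ m = y.toFreeMonoid) :
      ∃ x : FreeSemigroup B, x.toFreeMonoid = m ∧ FreeSemigroup.lift w x = y := by
    obtain rfl | ⟨x, rfl⟩ := FreeSemigroup.eq_one_or_toFreeMonoid m
    · exact absurd (hm.symm.trans (map_one φ)) (FreeSemigroup.toFreeMonoid_ne_one y)
    · exact ⟨x, rfl, FreeSemigroup.toFreeMonoid_injective ((hφ x).symm.trans hm)⟩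
  ext ⟨m₁, m₂⟩
  simp only [Set.mem_preimage, mem_wordProblem, Prod.map_fst, Prod.map_snd]
  constructor
  · rintro ⟨x₁, x₂, hx, rfl, rfl⟩
    exact ⟨_, _, by rw [hf, hf, hx], (hφ x₁).symm, (hφ x₂).symm⟩
  · rintro ⟨y₁, y₂, hy, hm₁, hm₂⟩
    obtain ⟨x₁, rfl, rfl⟩ := lift_of_image hm₁.symm
    obtain ⟨x₂, rfl, rfl⟩ := lift_of_image hm₂.symm
    exact ⟨x₁, x₂, hh (by rw [← hf, ← hf, hy]), rfl, rfl⟩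

end WordProblem

/-- If a semigroup has rational word problem, then so does every finitely
generated subsemigroup of it. -/
theorem hasRationalWordProblem_of_fg_subsemigroup (S : Type) [Semigroup S]
    (h : HasRationalWordProblem S)
    (T : Subsemigroup S)
    (hfg : ∃ F : Finset S, Subsemigroup.closure (F : Set S) = T) :
    HasRationalWordProblem ↥T := by
  obtain ⟨A, _, f, hf, hR⟩ := h
  obtain ⟨F, rfl⟩ := hfg
  choose w hw using fun x : (F : Set S) => hf x
  refine ⟨F, inferInstance, _, Subsemigroup.lift_closure_surjective _, ?_⟩
  rw [wordProblem_eq_preimage f (h := MulMemClass.subtype _) Subtype.val_injective _ w hw]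
  exact hR.preimage_prodMap _ _ (fun b => by simp) (fun b => by simp)
end

section
/- The inverse semigroup generated by a forward link, and likewise the inverse semigroup generated by a backward link, is isomorphic to the bicyclic monoid. -/
/-!
A forward link along an injective sequence `a` is the conjugate, by the total injection
`i ↦ aᵢ`, of the partial shift `i ↦ i + 1` of `ℕ`. The bicyclic monoid acts faithfully on `ℕ`
by partial bijections, `cᵐbⁿ` acting as `i ↦ i - m + n` on `{i ≥ m}`, and the action turns
`cⁿbᵐ` into the inverse of `cᵐbⁿ`. Since `b` (the shift) and `c = b⁻¹` generate the monoid,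
the inverse semigroup generated by the link is exactly the image of this faithful
representation. A backward link generates the same inverse semigroup as its inverse.
-/

/-- The bicyclic monoid `Mon⟨b, c | bc = 1⟩`, modelled as `ℕ × ℕ` where `(m, n)`
stands for `cᵐbⁿ`. -/
def Bicyclic : Type := ℕ × ℕ

/-- Multiplication of the bicyclic monoid: `cᵐbⁿ · cᵖbᑫ = c^(m + (p ∸ n)) b^(q + (n ∸ p))`. -/
def bmul (x y : ℕ × ℕ) : ℕ × ℕ := (x.1 + (y.1 - x.2), y.2 + (x.2 - y.1))

instance : Monoid Bicyclic where
  mul x y := bmul x y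
  one := ((0, 0) : ℕ × ℕ)
  mul_assoc x y z := by
    show bmul (bmul x y) z = bmul x (bmul y z)
    simp only [bmul, Prod.mk.injEq]
    omega
  one_mul x := by
    obtain ⟨a, b⟩ := x
    show bmul (0, 0) (a, b) = (a, b)
    simp only [bmul, Prod.mk.injEq]
    omega
  mul_one x := by
    obtain ⟨a, b⟩ := x
    show bmul (a, b) (0, 0) = (a, b)
    simp only [bmul, Prod.mk.injEq]
    omega

/-- The symmetric inverse semigroup: partial bijections of `X` under composition. -/
instance PEquiv.instSemigroup {X : Type} : Semigroup (PEquiv X X) where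
  mul f g := f.trans g
  mul_assoc f g h := by
    apply PEquiv.ext
    intro x
    show ((f.trans g).trans h) x = (f.trans (g.trans h)) x
    simp [PEquiv.trans]
    cases f x <;> simp

/-- The inverse subsemigroup `[u]` of the symmetric inverse semigroup generated by a
partial bijection `u`: the smallest subsemigroup containing `u` and closed under
taking inverse partial bijections. -/
def invClosure {X : Type} (u : PEquiv X X) : Subsemigroup (PEquiv X X) :=
  sInf {T : Subsemigroup (PEquiv X X) | u ∈ T ∧ ∀ f ∈ T, f.symm ∈ T}

/-- A forward link: the partial injection `aᵢ ↦ aᵢ₊₁` on a countably infinite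
sequence of distinct elements `a₀, a₁, a₂, …`, undefined elsewhere. -/
def IsForwardLink {X : Type} (f : PEquiv X X) : Prop :=
  ∃ a : ℕ → X, Function.Injective a ∧ (∀ i : ℕ, f (a i) = some (a (i + 1))) ∧
    (∀ x : X, (∀ i : ℕ, x ≠ a i) → f x = none)

/-- Two partial bijections `λ : A → B` and `μ : C → D` are strongly disjoint if
`A ∩ C = A ∩ D = B ∩ C = B ∩ D = ∅`, i.e. `(A ∪ B) ∩ (C ∪ D) = ∅`. -/
def StronglyDisjoint {X : Type} (f g : PEquiv X X) : Prop :=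
  ∀ x : X, (f x ≠ none ∨ f.symm x ≠ none) → (g x = none ∧ g.symm x = none)

namespace Bicyclic

def mk (m n : ℕ) : Bicyclic := (m, n)

theorem mk_mul_mk (m n p q : ℕ) : mk m n * mk p q = mk (m + (p - n)) (q + (n - p)) := rfl

end Bicyclic

open Bicyclic

theorem PEquiv.mul_eq_trans {X : Type} (f g : PEquiv X X) : f * g = f.trans g := rfl

section invClosure

variable {X : Type} {u g : PEquiv X X}

theorem mem_invClosure_self (u : PEquiv X X) : u ∈ invClosure u :=
  Subsemigroup.mem_sInf.2 fun _ hT => hT.1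

theorem symm_mem_invClosure (hg : g ∈ invClosure u) : g.symm ∈ invClosure u :=
  Subsemigroup.mem_sInf.2 fun T hT => hT.2 g (Subsemigroup.mem_sInf.1 hg T hT)

theorem invClosure_le {T : Subsemigroup (PEquiv X X)} (hu : u ∈ T)
    (hT : ∀ g ∈ T, g.symm ∈ T) : invClosure u ≤ T :=
  sInf_le ⟨hu, hT⟩

theorem invClosure_symm (u : PEquiv X X) : invClosure u.symm = invClosure u := by
  apply le_antisymm
  · exact invClosure_le (symm_mem_invClosure (mem_invClosure_self u)) fun _ => symm_mem_invClosure
  · refine invClosure_le ?_ fun _ => symm_mem_invClosure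
    simpa only [PEquiv.symm_symm] using symm_mem_invClosure (mem_invClosure_self u.symm)

/-- Here `mk 0 1 = b`; the inclusion `⊇` writes `1 = b · b⁻¹` and `cᵐbⁿ = (bᵐ)⁻¹ · bⁿ`. -/
theorem invClosure_eq_srange (φ : Bicyclic →ₙ* PEquiv X X)
    (hφ : ∀ m n, φ (mk n m) = (φ (mk m n)).symm) : invClosure (φ (mk 0 1)) = φ.srange := by
  apply le_antisymm
  · refine invClosure_le ⟨mk 0 1, rfl⟩ ?_
    rintro _ ⟨⟨m, n⟩, rfl⟩
    exact ⟨mk n m, hφ m n⟩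
  have hb : φ (mk 0 1) ∈ invClosure (φ (mk 0 1)) := mem_invClosure_self _
  have hc : φ (mk 1 0) ∈ invClosure (φ (mk 0 1)) := hφ 0 1 ▸ symm_mem_invClosure hb
  have hbn : ∀ n, φ (mk 0 n) ∈ invClosure (φ (mk 0 1)) := by
    intro n
    induction n with
    | zero =>
      have hmul : mk 0 1 * mk 1 0 = mk 0 0 := rfl
      simpa only [← map_mul, hmul] using mul_mem hb hc
    | succ n ih =>
      have hmul : mk 0 n * mk 0 1 = mk 0 (n + 1) := by simp [mk_mul_mk, add_comm]
      simpa only [← map_mul, hmul] using mul_mem ih hb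
  rintro _ ⟨⟨m, n⟩, rfl⟩
  have hcm : φ (mk m 0) ∈ invClosure (φ (mk 0 1)) := hφ 0 m ▸ symm_mem_invClosure (hbn m)
  have hmul : mk m 0 * mk 0 n = mk m n := by simp [mk_mul_mk]
  change φ (mk m n) ∈ _
  simpa only [← map_mul, hmul] using mul_mem hcm (hbn n)

end invClosure

/-- `cᵐbⁿ` acts on `ℕ` as the partial bijection `i ↦ i - m + n` defined for `i ≥ m`. -/
def natShift (m n : ℕ) : PEquiv ℕ ℕ where
  toFun i := if m ≤ i then some (i - m + n) else none
  invFun j := if n ≤ j then some (j - n + m) else none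
  inv i j := by
    simp only [Option.ite_none_right_eq_some, Option.some.injEq]
    omega

theorem natShift_apply (m n i : ℕ) :
    natShift m n i = if m ≤ i then some (i - m + n) else none := rfl

theorem natShift_symm (m n : ℕ) : (natShift m n).symm = natShift n m := rfl

theorem natShift_trans (m n p q : ℕ) :
    (natShift m n).trans (natShift p q) = natShift (m + (p - n)) (q + (n - p)) := by
  ext i j
  simp only [PEquiv.trans_eq_some, natShift_apply, Option.ite_none_right_eq_some,
    Option.some.injEq]
  constructor
  · rintro ⟨k, ⟨hm, rfl⟩, hp, rfl⟩
    omega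
  · rintro ⟨hm, rfl⟩
    exact ⟨i - m + n, ⟨by omega, rfl⟩, by omega, by omega⟩

theorem natShift_injective {m n m' n' : ℕ} (h : natShift m n = natShift m' n') :
    m = m' ∧ n = n' := by
  have key : ∀ {m n m' n'}, natShift m n = natShift m' n' → m' ≤ m ∧ n = m - m' + n' := by
    intro m n m' n' h
    have := congrArg (· m) h
    simp only [natShift_apply, le_refl, if_true, Nat.sub_self, zero_add] at this
    split_ifs at this with hm
    exact ⟨hm, Option.some.inj this⟩
  have h₁ := key h
  have h₂ := key h.symm
  omega

def shiftHom : Bicyclic →ₙ* PEquiv ℕ ℕ where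
  toFun p := natShift p.1 p.2
  map_mul' _ _ := (natShift_trans _ _ _ _).symm

theorem shiftHom_mk (m n : ℕ) : shiftHom (mk m n) = natShift m n := rfl

theorem shiftHom_injective : Function.Injective shiftHom := by
  rintro ⟨m, n⟩ ⟨m', n'⟩ h
  obtain ⟨rfl, rfl⟩ := natShift_injective h
  rfl

namespace PEquiv

variable {α β : Type}

theorem trans_apply {γ : Type} (f : α ≃. β) (g : β ≃. γ) (a : α) :
    f.trans g a = (f a).bind g := rfl

noncomputable def ofInjective (f : α → β) (hf : Function.Injective f) : α ≃. β where
  toFun a := some (f a)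
  invFun := Function.partialInv f
  inv a b := by simpa [eq_comm] using hf.isPartialInv a b

theorem ofInjective_apply {f : α → β} (hf : Function.Injective f) (a : α) :
    ofInjective f hf a = some (f a) := rfl

theorem ofInjective_symm_apply_self {f : α → β} (hf : Function.Injective f) (a : α) :
    (ofInjective f hf).symm (f a) = some a :=
  Function.partialInv_left hf a

theorem ofInjective_symm_apply_of_notMem_range {f : α → β} (hf : Function.Injective f) {b : β}
    (hb : b ∉ Set.range f) : (ofInjective f hf).symm b = none := by
  rw [Option.eq_none_iff_forall_ne_some]
  intro a ha
  exact hb ⟨a, (hf.isPartialInv a b).1 ha⟩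

theorem ofInjective_trans_symm {f : α → β} (hf : Function.Injective f) :
    (ofInjective f hf).trans (ofInjective f hf).symm = PEquiv.refl α :=
  trans_symm_eq_iff_forall_isSome.2 fun _ => rfl

def conjHom (ι : α ≃. β) (hι : ι.trans ι.symm = PEquiv.refl α) :
    (α ≃. α) →ₙ* (β ≃. β) where
  toFun g := ι.symm.trans (g.trans ι)
  map_mul' g h := by
    simp only [mul_eq_trans, trans_assoc]
    rw [← trans_assoc ι, hι, refl_trans]

theorem conjHom_apply (ι : α ≃. β) (hι : ι.trans ι.symm = PEquiv.refl α) (g : α ≃. α) :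
    conjHom ι hι g = ι.symm.trans (g.trans ι) := rfl

theorem conjHom_symm {ι : α ≃. β} (hι : ι.trans ι.symm = PEquiv.refl α) (g : α ≃. α) :
    conjHom ι hι g.symm = (conjHom ι hι g).symm := by
  simp only [conjHom, MulHom.coe_mk, symm_trans_rev, symm_symm, trans_assoc]

theorem conjHom_injective {ι : α ≃. β} (hι : ι.trans ι.symm = PEquiv.refl α) :
    Function.Injective (conjHom ι hι) := by
  have hret : ∀ g, ι.trans ((conjHom ι hι g).trans ι.symm) = g := fun g => by
    simp only [conjHom, MulHom.coe_mk, trans_assoc, ← trans_assoc ι ι.symm, hι, refl_trans,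
      trans_refl]
  intro g h hgh
  rw [← hret g, ← hret h, hgh]

end PEquiv

section link

variable {X : Type} {a : ℕ → X}

/-- The representation `cᵐbⁿ ↦ (aᵢ ↦ aᵢ₋ₘ₊ₙ for i ≥ m)` of the bicyclic monoid along an
injective sequence `a`. -/
noncomputable def linkHom (ha : Function.Injective a) : Bicyclic →ₙ* PEquiv X X :=
  (PEquiv.conjHom _ (PEquiv.ofInjective_trans_symm ha)).comp shiftHom

theorem linkHom_injective (ha : Function.Injective a) : Function.Injective (linkHom ha) :=
  (PEquiv.conjHom_injective (PEquiv.ofInjective_trans_symm ha)).comp shiftHom_injective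

theorem linkHom_mk_symm (ha : Function.Injective a) (m n : ℕ) :
    linkHom ha (mk n m) = (linkHom ha (mk m n)).symm :=
  PEquiv.conjHom_symm (PEquiv.ofInjective_trans_symm ha) (natShift m n)

theorem linkHom_mk_zero_one {f : PEquiv X X} (ha : Function.Injective a)
    (hstep : ∀ i, f (a i) = some (a (i + 1))) (hout : ∀ x, (∀ i, x ≠ a i) → f x = none) :
    linkHom ha (mk 0 1) = f := by
  ext1 x
  rw [linkHom, MulHom.comp_apply, PEquiv.conjHom_apply, shiftHom_mk]
  by_cases hx : x ∈ Set.range a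
  · obtain ⟨i, rfl⟩ := hx
    simp only [PEquiv.trans_apply, PEquiv.ofInjective_symm_apply_self, Option.bind_some,
      natShift_apply, zero_le, if_true, Nat.sub_zero, PEquiv.ofInjective_apply, hstep]
  · rw [hout x fun i hi => hx ⟨i, hi.symm⟩, PEquiv.trans_apply,
      PEquiv.ofInjective_symm_apply_of_notMem_range ha hx, Option.bind_none]

end link

theorem MulHom.nonempty_mulEquiv_srange {M N : Type*} [Mul M] [Mul N] (φ : M →ₙ* N)
    (hφ : Function.Injective φ) : Nonempty (M ≃* φ.srange) :=
  ⟨MulEquiv.ofBijective φ.srangeRestrict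
    ⟨fun _ _ h => hφ (congrArg Subtype.val h), φ.srangeRestrict_surjective⟩⟩

theorem invClosure_forwardLink_mulEquiv_bicyclic {X : Type} {f : PEquiv X X}
    (hf : IsForwardLink f) : Nonempty (invClosure f ≃* Bicyclic) := by
  obtain ⟨a, ha, hstep, hout⟩ := hf
  have hrange : invClosure f = (linkHom ha).srange := by
    rw [← linkHom_mk_zero_one ha hstep hout]
    exact invClosure_eq_srange _ (linkHom_mk_symm ha)
  obtain ⟨e⟩ := (linkHom ha).nonempty_mulEquiv_srange (linkHom_injective ha)
  exact ⟨(MulEquiv.subsemigroupCongr hrange).trans e.symm⟩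

/-- The inverse semigroup generated by a forward link, and likewise the inverse
semigroup generated by a backward link (the inverse of a forward link), is
isomorphic to the bicyclic monoid. -/
theorem invClosure_link_mulEquiv_bicyclic {X : Type} (f : PEquiv X X)
    (h : IsForwardLink f ∨ ∃ g : PEquiv X X, IsForwardLink g ∧ f = g.symm) :
    Nonempty (↥(invClosure f) ≃* Bicyclic) := by
  rcases h with hf | ⟨g, hg, rfl⟩
  · exact invClosure_forwardLink_mulEquiv_bicyclic hf
  · rw [invClosure_symm]
    exact invClosure_forwardLink_mulEquiv_bicyclic hg
end

section
/- A group has rational word problem if and only if it is finite; consequently, a semigroup with rational word problem cannot contain an infinite subgroup. -/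
/-!
A finite semigroup `S` has rational word problem with generators `S` itself: adjoining an identity,
a two-tape word lies in the word problem iff its image under a monoid homomorphism to the finite
monoid `WithOne S × WithOne S` is diagonal, and preimages of sets under homomorphisms to finite
monoids are regular.

Conversely, fixing the second tape of a rational relation to a word `v` leaves a regular language.
If `T` is a group inside a semigroup with rational word problem, take `v` to represent the identity
`e` of `T`: the left quotients of this regular language at words for `t, t' ∈ T` coincide only if
`t * y = e ↔ t' * y = e` for all `y`, forcing `t = t'`. By Myhill–Nerode there are finitely many
left quotients, so `T` is finite.
-/

open FreeMonoid

namespace Language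

variable {α : Type*}

theorem isRegular_preimage_monoidHom {M : Type*} [Monoid M] [Finite M] (φ : FreeMonoid α →* M)
    (S : Set M) : Language.IsRegular ({l | φ (ofList l) ∈ S} : Set (List α)) := by
  refine IsRegular.of_finite_range_leftQuotient <|
    (Set.finite_range fun m : M => ({l | m * φ (ofList l) ∈ S} : Language α)).subset ?_
  rintro _ ⟨x, rfl⟩
  refine ⟨φ (ofList x), ?_⟩
  ext y
  change φ (ofList x) * φ (ofList y) ∈ S ↔ φ (ofList (x ++ y)) ∈ S
  rw [ofList_append, map_mul]

end Language

section TwoTape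

variable {A : Type}

theorem twoTapeHom_apply (w : FreeMonoid (A ⊕ A)) :
    twoTapeHom A w = (ofList (w.toList.filterMap Sum.getLeft?),
      ofList (w.toList.filterMap Sum.getRight?)) := by
  induction w using FreeMonoid.inductionOn' with
  | one => rfl
  | of_mul c w ih =>
    rw [map_mul, ih]
    cases c <;> simp [twoTapeHom, List.filterMap_cons]

theorem twoTapeHom_surjective (A : Type) : Function.Surjective (twoTapeHom A) := by
  rintro ⟨x, y⟩
  have hl : (twoTapeHom A).comp (FreeMonoid.map Sum.inl) = MonoidHom.inl _ _ :=
    FreeMonoid.hom_eq fun _ => rfl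
  have hr : (twoTapeHom A).comp (FreeMonoid.map Sum.inr) = MonoidHom.inr _ _ :=
    FreeMonoid.hom_eq fun _ => rfl
  refine ⟨FreeMonoid.map Sum.inl x * FreeMonoid.map Sum.inr y, ?_⟩
  rw [map_mul, ← MonoidHom.comp_apply, hl, ← MonoidHom.comp_apply, hr]
  simp

theorem mk_ofList_mem_image_twoTapeHom_iff {L : Language (A ⊕ A)} {u v : List A} :
    (ofList u, ofList v) ∈ twoTapeHom A '' {w | w.toList ∈ L} ↔
      ∃ w ∈ L, w.filterMap Sum.getLeft? = u ∧ w.filterMap Sum.getRight? = v := by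
  constructor
  · rintro ⟨w, hw, h⟩
    rw [twoTapeHom_apply, Prod.mk.injEq] at h
    exact ⟨w.toList, hw, ofList.injective h.1, ofList.injective h.2⟩
  · rintro ⟨w, hw, rfl, rfl⟩
    exact ⟨ofList w, hw, by rw [twoTapeHom_apply]; rfl⟩

theorem IsRationalRel.isRegular_fiber {R : Set (FreeMonoid A × FreeMonoid A)}
    (hR : IsRationalRel R) (v : List A) :
    Language.IsRegular ({u | (ofList u, ofList v) ∈ R} : Set (List A)) := by
  obtain ⟨L, hL, rfl⟩ := hR
  -- After reading `u` on the first tape, a run is summarised by the left quotient of `L` it has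
  -- reached and the prefix of `v` it has consumed on the second tape; finitely many such data.
  let conf (u : List A) : Set (Language (A ⊕ A) × List A) :=
    {c | ∃ w₁, w₁.filterMap Sum.getLeft? = u ∧ w₁.filterMap Sum.getRight? <+: v ∧
      c = (L.leftQuotient w₁, w₁.filterMap Sum.getRight?)}
  let lang (C : Set (Language (A ⊕ A) × List A)) : Language A :=
    {y | ∃ c ∈ C, ∃ w₂ ∈ c.1, w₂.filterMap Sum.getLeft? = y ∧
      c.2 ++ w₂.filterMap Sum.getRight? = v}
  have hconf : (Set.range conf).Finite :=
    (hL.finite_range_leftQuotient.prod (List.finite_toSet v.inits)).finite_subsets.subset <| by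
      rintro _ ⟨u, rfl⟩ _ ⟨w₁, -, hpre, rfl⟩
      exact ⟨⟨w₁, rfl⟩, (List.mem_inits _ _).2 hpre⟩
  refine Language.IsRegular.of_finite_range_leftQuotient ((hconf.image lang).subset ?_)
  rintro _ ⟨u, rfl⟩
  refine ⟨conf u, ⟨u, rfl⟩, ?_⟩
  ext y
  change y ∈ lang (conf u) ↔ (ofList (u ++ y), ofList v) ∈ twoTapeHom A '' {w | w.toList ∈ L}
  rw [mk_ofList_mem_image_twoTapeHom_iff]
  constructor
  · rintro ⟨_, ⟨w₁, h₁, -, rfl⟩, w₂, hw₂, h₂, hv⟩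
    exact ⟨w₁ ++ w₂, hw₂, by simp [h₁, h₂], by simp [hv]⟩
  · rintro ⟨w, hw, hl, hr⟩
    obtain ⟨w₁, w₂, rfl, h₁, h₂⟩ := List.filterMap_eq_append_iff.1 hl
    rw [List.filterMap_append] at hr
    exact ⟨_, ⟨w₁, h₁, ⟨_, hr⟩, rfl⟩, w₂, hw, h₂, hr⟩

end TwoTape

section WordProblem

variable {A S : Type} [Semigroup S] (f : A → S)

theorem lift_coe_freeSemigroupToWord (w : FreeSemigroup A) :
    FreeMonoid.lift (fun a => (f a : WithOne S)) (freeSemigroupToWord w) =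
      FreeSemigroup.lift f w := by
  induction w with
  | ih1 a => simp [freeSemigroupToWord]
  | ih2 x y hx hy => simp [hx, hy]

theorem exists_freeSemigroupToWord_eq {x : FreeMonoid A} (hx : x ≠ 1) :
    ∃ w, freeSemigroupToWord w = x := by
  induction x using FreeMonoid.inductionOn' with
  | one => exact absurd rfl hx
  | of_mul b x ih =>
    by_cases h : x = 1
    · exact ⟨FreeSemigroup.of b, by simp [h, freeSemigroupToWord]⟩
    · obtain ⟨w, hw⟩ := ih h
      exact ⟨FreeSemigroup.of b * w, by rw [map_mul, hw]; rfl⟩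

theorem mem_wordProblem_iff {x y : FreeMonoid A} :
    (x, y) ∈ wordProblem f ↔ ∃ s : S, FreeMonoid.lift (fun a => (f a : WithOne S)) x = s ∧
      FreeMonoid.lift (fun a => (f a : WithOne S)) y = s := by
  constructor
  · rintro ⟨w₁, w₂, h, hxy⟩
    obtain ⟨rfl, rfl⟩ := Prod.mk.inj hxy
    exact ⟨_, lift_coe_freeSemigroupToWord f w₁, by rw [lift_coe_freeSemigroupToWord, h]⟩
  · rintro ⟨s, h₁, h₂⟩
    have hne : ∀ x : FreeMonoid A, FreeMonoid.lift (fun a => (f a : WithOne S)) x = s → x ≠ 1 :=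
      fun x hx h1 => WithOne.one_ne_coe (by rw [← hx, h1, map_one])
    obtain ⟨w₁, rfl⟩ := exists_freeSemigroupToWord_eq (hne _ h₁)
    obtain ⟨w₂, rfl⟩ := exists_freeSemigroupToWord_eq (hne _ h₂)
    rw [lift_coe_freeSemigroupToWord] at h₁ h₂
    exact ⟨w₁, w₂, WithOne.coe_inj.1 (h₁.trans h₂.symm), rfl⟩

theorem mk_freeSemigroupToWord_mem_wordProblem_iff {w₁ w₂ : FreeSemigroup A} :
    (freeSemigroupToWord w₁, freeSemigroupToWord w₂) ∈ wordProblem f ↔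
      FreeSemigroup.lift f w₁ = FreeSemigroup.lift f w₂ := by
  simp [mem_wordProblem_iff, lift_coe_freeSemigroupToWord, eq_comm]

end WordProblem

theorem hasRationalWordProblem_of_finite (S : Type) [Semigroup S] [Finite S] :
    HasRationalWordProblem S := by
  have := Fintype.ofFinite S
  have : Finite (WithOne S) := inferInstanceAs (Finite (Option S))
  let eval : FreeMonoid S →* WithOne S := FreeMonoid.lift (↑)
  let diag : Set (WithOne S × WithOne S) := {p | ∃ s : S, p.1 = s ∧ p.2 = s}
  refine ⟨S, inferInstance, id, fun s => ⟨FreeSemigroup.of s, rfl⟩, _,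
    Language.isRegular_preimage_monoidHom ((eval.prodMap eval).comp (twoTapeHom S)) diag, ?_⟩
  change twoTapeHom S '' (twoTapeHom S ⁻¹' (Prod.map eval eval ⁻¹' diag)) = _
  rw [Set.image_preimage_eq _ (twoTapeHom_surjective S)]
  ext ⟨x, y⟩
  exact (mem_wordProblem_iff id).symm

theorem HasRationalWordProblem.subsemigroup_finite_of_group {S : Type} [Semigroup S]
    (h : HasRationalWordProblem S) (T : Subsemigroup S) (e : T)
    (he : ∀ x : T, e * x = x ∧ x * e = x) (hinv : ∀ x : T, ∃ y : T, x * y = e ∧ y * x = e) :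
    Finite T := by
  obtain ⟨A, -, f, hsurj, hrat⟩ := h
  choose rep hrep using fun t : T => hsurj t
  let word (t : T) : List A := (freeSemigroupToWord (rep t)).toList
  let K : Language A := {u | (ofList u, ofList (word e)) ∈ wordProblem f}
  have hK : ∀ t y : T, word y ∈ K.leftQuotient (word t) ↔ t * y = e := by
    intro t y
    change (ofList (word t ++ word y), ofList (word e)) ∈ wordProblem f ↔ _
    rw [ofList_append, ofList_toList, ofList_toList, ofList_toList, ← map_mul,
      mk_freeSemigroupToWord_mem_wordProblem_iff, map_mul, hrep, hrep, hrep,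
      ← MulMemClass.coe_mul, Subtype.coe_inj]
  have : Finite (Set.range fun t => K.leftQuotient (word t)) :=
    ((hrat.isRegular_fiber _).finite_range_leftQuotient.subset
      (Set.range_comp_subset_range word K.leftQuotient)).to_subtype
  refine Finite.of_injective_finite_range (f := fun t => K.leftQuotient (word t)) ?_
  intro t₁ t₂ (hq : K.leftQuotient (word t₁) = K.leftQuotient (word t₂))
  obtain ⟨y, hy₁, hy₂⟩ := hinv t₁
  have hy : t₂ * y = e := (hK t₂ y).1 (hq ▸ (hK t₁ y).2 hy₁)
  calc t₁ = e * t₁ := (he t₁).1.symm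
    _ = t₂ * (y * t₁) := by rw [← mul_assoc, hy]
    _ = t₂ := by rw [hy₂, (he t₂).2]

/-- **Anisimov's theorem.** A group has rational word problem if and only if it is
finite; consequently, a semigroup with rational word problem cannot contain an
infinite subgroup (a subsemigroup which is a group). -/
theorem group_hasRationalWordProblem_iff_finite :
    (∀ (G : Type) [Group G], HasRationalWordProblem G ↔ Finite G) ∧
    (∀ (S : Type) [Semigroup S], HasRationalWordProblem S →
      ∀ T : Subsemigroup S,
        (∃ e : ↥T, (∀ x : ↥T, e * x = x ∧ x * e = x) ∧
          ∀ x : ↥T, ∃ y : ↥T, x * y = e ∧ y * x = e) →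
        Finite ↥T) := by
  refine ⟨fun G _ => ⟨fun h => ?_, fun _ => hasRationalWordProblem_of_finite G⟩,
    fun S _ h T ⟨e, he, hinv⟩ => h.subsemigroup_finite_of_group T e he hinv⟩
  have : Finite (⊤ : Subsemigroup G) :=
    h.subsemigroup_finite_of_group ⊤ ⟨1, trivial⟩
      (fun _ => ⟨Subtype.ext (one_mul _), Subtype.ext (mul_one _)⟩)
      (fun x => ⟨⟨(x : G)⁻¹, trivial⟩, Subtype.ext (mul_inv_cancel _),
        Subtype.ext (inv_mul_cancel _)⟩)
  exact Finite.of_equiv _ Subsemigroup.topEquiv.toEquiv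
end
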